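/- arXiv:2604.27156 — 11 statements merged into one kernel-verified Lean document; each statement's English description precedes it below -/
import Mathlib

section
/- Let V be a nonempty finite type and r a binary relation on V. Then r satisfies the Ferrers condition (i.e., r is a biorder) if and only if there exist functions L, U : V → ℕ such that for all v, v' in V, r v v' holds if and only if L v ≤ U v'. -/
/-- The Ferrers condition: `r` is a biorder. -/
def Ferrers {V : Type*} (r : V → V → Prop) : Prop :=
  ∀ v u v' u', r v u → r v' u' → r v u' ∨ r v' u

theorem biorder_iff_biorder_based_interpretation
    (V : Type*) [Fintype V] [Nonempty V] (r : V → V → Prop) :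
    Ferrers r ↔ ∃ L U : V → ℕ, ∀ v v', r v v' ↔ L v ≤ U v' := by
  classical
  constructor
  · intro hF
    -- rows are totally ordered by inclusion
    have total : ∀ v w, (¬ ∀ x, r w x → r v x) → ∀ x, r v x → r w x := by
      intro v w h x hvx
      push_neg at h
      obtain ⟨u', hwu', hvu'⟩ := h
      rcases hF v x w u' hvx hwu' with h1 | h1
      · exact absurd h1 hvu'
      · exact h1
    refine ⟨fun v => (Finset.univ.filter (fun w => ∀ x, r v x → r w x)).card,
            fun u => (Finset.univ.filter (fun w => r w u)).card, ?_⟩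
    intro v u
    constructor
    · intro hvu
      apply Finset.card_le_card
      intro w hw
      simp only [Finset.mem_filter, Finset.mem_univ, true_and] at hw ⊢
      exact hw u hvu
    · intro hcard
      dsimp only at hcard
      by_contra hvu
      have hsub : (Finset.univ.filter (fun w => r w u)) ⊆
          (Finset.univ.filter (fun w => ∀ x, r v x → r w x)).erase v := by
        intro w hw
        simp only [Finset.mem_filter, Finset.mem_univ, true_and] at hw
        rw [Finset.mem_erase]
        constructor
        · rintro rfl; exact hvu hw
        · simp only [Finset.mem_filter, Finset.mem_univ, true_and]
          apply total
          intro h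
          exact hvu (h u hw)
      have h1 := Finset.card_le_card hsub
      have hv : v ∈ Finset.univ.filter (fun w => ∀ x, r v x → r w x) := by
        simp only [Finset.mem_filter, Finset.mem_univ, true_and]
        exact fun x hx => hx
      have h2 := Finset.card_erase_of_mem hv
      have h3 : 0 < (Finset.univ.filter (fun w => ∀ x, r v x → r w x)).card :=
        Finset.card_pos.mpr ⟨v, hv⟩
      omega
  · rintro ⟨L, U, h⟩ v u v' u' hvu hvu'
    rw [h] at hvu hvu' ⊢
    rw [h]
    rcases le_total (L v) (L v') with hle | hle
    · left; omega
    · right; omega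
end

section
/- Let V be a nonempty finite type and L, U : V → ℕ a biorder-based interpretation satisfying BZT: for all u, z in V, if L u ≤ U z and U z < U u then L z ≤ U z. Then the induced relation r_{L,U} (defined by r_{L,U} v v' iff L v ≤ U v') is z-transitive: for all u, v, z, if r_{L,U} u v, r_{L,U} v z and ¬ r_{L,U} z z, then r_{L,U} u z. -/
theorem BZT_implies_zTransitive
    (V : Type*) [Fintype V] [Nonempty V] (L U : V → ℕ)
    (hBZT : ∀ u z : V, L u ≤ U z → U z < U u → L z ≤ U z) :
    ∀ u v z : V, L u ≤ U v → L v ≤ U z → ¬ (L z ≤ U z) → L u ≤ U z := by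
  intro u v z h1 h2 h3
  have : U v ≤ U z := by
    by_contra h
    exact h3 (hBZT v z h2 (not_le.mp h))
  exact h1.trans this
end

section
/- Let V be a nonempty finite type, let r be a z-transitive biorder on V, and let L, U : V → ℕ be a compressed biorder-based interpretation with r_{L,U} = r. Then (L, U) satisfies BZT: for all u, z in V, if L u ≤ U z and U z < U u then L z ≤ U z. -/
/-- z-transitivity of a relation. -/
def ZTrans {V : Type*} (r : V → V → Prop) : Prop :=
  ∀ u v z, r u v → r v z → ¬ r z z → r u z

theorem compressed_of_zTransitive_satisfies_BZT
    (V : Type*) [Fintype V] [Nonempty V] (r : V → V → Prop)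
    (hFerrers : Ferrers r) (hZT : ZTrans r)
    (L U : V → ℕ)
    (hrLU : ∀ v v', r v v' ↔ L v ≤ U v')
    (hcompL : ∀ i j : ℕ, 1 ≤ i → i < j → j ∈ Set.range L → i ∈ Set.range L)
    (hcompU : ∀ i j : ℕ, i < j → j ∈ Set.range U → i ∈ Set.range U)
    (hcompMax : Finset.univ.sup U ≤ Finset.univ.sup L ∧
      Finset.univ.sup L ≤ Finset.univ.sup U + 1) :
    ∀ u z : V, L u ≤ U z → U z < U u → L z ≤ U z := by
  intro u z hLu hUz
  by_contra h
  push_neg at h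
  obtain ⟨v, hvL⟩ : (U z + 1) ∈ Set.range L := by
    rcases eq_or_lt_of_le (Nat.succ_le_of_lt h) with he | hl
    · exact ⟨z, he.symm⟩
    · exact hcompL (U z + 1) (L z) (Nat.succ_le_succ (Nat.zero_le _)) hl ⟨z, rfl⟩
  have hrvu : r v u := (hrLU v u).2 (by omega)
  have hruz : r u z := (hrLU u z).2 hLu
  have hnzz : ¬ r z z := fun hzz => absurd ((hrLU z z).1 hzz) (by omega)
  have := (hrLU v z).1 (hZT v u z hrvu hruz hnzz)
  omega
end

section
/- Let V be a nonempty finite type, let r be a transitive biorder on V, and let L, U : V → ℕ be a compressed biorder-based interpretation with r_{L,U} = r. Then U v ≤ L v for all v in V. -/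
theorem compressed_of_transitive_satisfies_BT
    (V : Type*) [Fintype V] [Nonempty V] (r : V → V → Prop)
    (hFerrers : Ferrers r) (hTrans : Transitive r)
    (L U : V → ℕ)
    (hrLU : ∀ v v', r v v' ↔ L v ≤ U v')
    (hcompL : ∀ i j : ℕ, 1 ≤ i → i < j → j ∈ Set.range L → i ∈ Set.range L)
    (hcompU : ∀ i j : ℕ, i < j → j ∈ Set.range U → i ∈ Set.range U)
    (hcompMax : Finset.univ.sup U ≤ Finset.univ.sup L ∧
      Finset.univ.sup L ≤ Finset.univ.sup U + 1) :
    ∀ v : V, U v ≤ L v := by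
  intro v
  by_contra h
  push_neg at h
  -- h : L v < U v
  obtain ⟨a, -, ha⟩ := Finset.exists_mem_eq_sup (Finset.univ : Finset V)
    Finset.univ_nonempty L
  have hUle : U v ≤ Finset.univ.sup L :=
    le_trans (Finset.le_sup (Finset.mem_univ v)) hcompMax.1
  have hUv1 : 1 ≤ U v := by omega
  have hUvL : U v ∈ Set.range L := by
    rcases eq_or_lt_of_le hUle with heq | hlt
    · exact ⟨a, by omega⟩
    · exact hcompL (U v) (Finset.univ.sup L) hUv1 hlt ⟨a, ha.symm⟩
  obtain ⟨w, hw⟩ := hUvL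
  obtain ⟨c, hc⟩ := hcompU (U v - 1) (U v) (by omega) ⟨v, rfl⟩
  have hwv : r w v := (hrLU w v).mpr (by omega)
  have hvc : r v c := (hrLU v c).mpr (by omega)
  have hwc : L w ≤ U c := (hrLU w c).mp (hTrans hwv hvc)
  omega
end

section
/- Let V be a nonempty finite type and K ⊆ V nonempty. A function f : Set V → Set V satisfies Tautology, Success, Inclusion, Consistency, Disjunctive Overlap and Disjunctive Rationality if and only if there exists an interval order r on V anchored on K such that f A = opt(A, r) for every A ⊆ V. (This is the representation theorem for interval-order-based (IOB) revision operators.) -/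
/-- Optimal elements of `S` w.r.t. `r`. -/
def opt {V : Type*} (S : Set V) (r : V → V → Prop) : Set V :=
  {v ∈ S | ∀ u ∈ S, r v u}

section Relation

variable {V : Type*} {r : V → V → Prop} {A B S : Set V}

theorem opt_inter_subset_opt (hAS : A ⊆ S) : opt S r ∩ A ⊆ opt A r :=
  fun _ ⟨⟨_, hv⟩, hvA⟩ => ⟨hvA, fun u hu => hv u (hAS hu)⟩

theorem opt_union_subset : opt (A ∪ B) r ⊆ opt A r ∪ opt B r := by
  intro v hv
  rcases hv.1 with hvA | hvB
  · exact .inl (opt_inter_subset_opt Set.subset_union_left ⟨hv, hvA⟩)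
  · exact .inr (opt_inter_subset_opt Set.subset_union_right ⟨hv, hvB⟩)

theorem Ferrers.opt_subset_opt_union_or (hF : Ferrers r) :
    opt A r ⊆ opt (A ∪ B) r ∨ opt B r ⊆ opt (A ∪ B) r := by
  by_contra! h
  obtain ⟨⟨v, hvA, hv⟩, ⟨w, hwB, hw⟩⟩ := And.imp Set.not_subset.mp Set.not_subset.mp h
  simp only [opt, Set.mem_ofPred_eq, not_and, not_forall] at hv hw
  obtain ⟨b, hb, hvb⟩ := hv (.inl hvA.1)
  obtain ⟨a, ha, hwa⟩ := hw (.inr hwB.1)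
  have hbB : b ∈ B := hb.resolve_left fun hbA => hvb (hvA.2 b hbA)
  have haA : a ∈ A := ha.resolve_right fun haB => hwa (hwB.2 a haB)
  exact (hF v a w b (hvA.2 a haA) (hwB.2 b hbB)).elim hvb hwa

theorem Ferrers.opt_nonempty (hrefl : ∀ v, r v v) (hF : Ferrers r) (hS : S.Finite)
    (hne : S.Nonempty) : (opt S r).Nonempty := by
  induction S, hS using Set.Finite.induction_on with
  | empty => exact absurd hne Set.not_nonempty_empty
  | @insert a S _ _ ih =>
    rcases S.eq_empty_or_nonempty with rfl | hSne
    · exact ⟨a, .inl rfl, fun _ hu => hu.elim (· ▸ hrefl a) (absurd · (Set.notMem_empty _))⟩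
    obtain ⟨v, hvS, hv⟩ := ih hSne
    by_cases hva : r v a
    · exact ⟨v, .inr hvS, fun u hu => hu.elim (· ▸ hva) (hv u)⟩
    · refine ⟨a, .inl rfl, fun u hu => hu.elim (· ▸ hrefl a) fun huS => ?_⟩
      exact (hF a a v u (hrefl a) (hv u huS)).resolve_right hva

end Relation

section ChoiceFunction

variable {V : Type*} {f : Set V → Set V} {A S : Set V}

def revealedPref (f : Set V → Set V) (v u : V) : Prop :=
  v ∈ f {v, u}

/-- Chernoff's contraction property. -/
theorem inter_subset_of_overlap (hS : ∀ A, f A ⊆ A) (hO : ∀ A B, f (A ∪ B) ⊆ f A ∪ f B)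
    (hAS : A ⊆ S) : f S ∩ A ⊆ f A := by
  rintro v ⟨hv, hvA⟩
  have hv' := hO A (S \ A) (by rwa [Set.union_sdiff_cancel hAS])
  exact hv'.resolve_right fun h => (hS _ h).2 hvA

theorem revealedPref_refl (hS : ∀ A, f A ⊆ A) (hC : ∀ A, A ≠ ∅ → f A ≠ ∅) (v : V) :
    revealedPref f v v := by
  obtain ⟨w, hw⟩ := Set.nonempty_iff_ne_empty.mpr (hC {v, v} (Set.insert_nonempty v _).ne_empty)
  have hwv : w = v := by simpa using hS _ hw
  exact hwv ▸ hw

theorem ferrers_revealedPref (hS : ∀ A, f A ⊆ A) (hO : ∀ A B, f (A ∪ B) ⊆ f A ∪ f B)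
    (hR : ∀ A B, f A ⊆ f (A ∪ B) ∨ f B ⊆ f (A ∪ B)) : Ferrers (revealedPref f) := by
  intro v u v' u' hvu hv'u'
  have hsub : ∀ x y, x ∈ f ({v, u} ∪ {v', u'}) → y ∈ ({v, u} ∪ {v', u'} : Set V) →
      x ∈ f {x, y} := fun x y hx hy =>
    inter_subset_of_overlap hS hO (Set.insert_subset (hS _ hx) (Set.singleton_subset_iff.mpr hy))
      ⟨hx, Set.mem_insert x _⟩
  rcases hR {v, u} {v', u'} with h | h
  · exact .inl (hsub v u' (h hvu) (by simp))
  · exact .inr (hsub v' u (h hv'u') (by simp))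

theorem subset_opt_revealedPref (hS : ∀ A, f A ⊆ A) (hO : ∀ A B, f (A ∪ B) ⊆ f A ∪ f B) :
    f A ⊆ opt A (revealedPref f) := fun v hv =>
  ⟨hS A hv, fun _ hu => inter_subset_of_overlap hS hO
    (Set.insert_subset (hS A hv) (Set.singleton_subset_iff.mpr hu)) ⟨hv, Set.mem_insert v _⟩⟩

theorem mem_insert_of_forall_revealedPref (hS : ∀ A, f A ⊆ A) (hC : ∀ A, A ≠ ∅ → f A ≠ ∅)
    (hR : ∀ A B, f A ⊆ f (A ∪ B) ∨ f B ⊆ f (A ∪ B)) {v : V} (hfin : S.Finite)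
    (hv : ∀ u ∈ S, revealedPref f v u) : v ∈ f (insert v S) := by
  induction S, hfin using Set.Finite.induction_on with
  | empty => simpa [revealedPref] using revealedPref_refl hS hC v
  | @insert a S _ _ ih =>
    have hvS : v ∈ f (insert v S) := ih fun u hu => hv u (.inr hu)
    have hva : v ∈ f {v, a} := hv a (.inl rfl)
    have hunion : insert v S ∪ {v, a} = insert v (insert a S) := by
      ext x; simp only [Set.mem_union, Set.mem_insert_iff, Set.mem_singleton_iff]; tauto
    rw [← hunion]
    exact (hR _ _).elim (· hvS) (· hva)

theorem opt_revealedPref_subset (hS : ∀ A, f A ⊆ A) (hC : ∀ A, A ≠ ∅ → f A ≠ ∅)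
    (hR : ∀ A B, f A ⊆ f (A ∪ B) ∨ f B ⊆ f (A ∪ B)) (hA : A.Finite) :
    opt A (revealedPref f) ⊆ f A := fun v ⟨hvA, hv⟩ => by
  simpa [Set.insert_eq_of_mem hvA] using mem_insert_of_forall_revealedPref hS hC hR hA hv

end ChoiceFunction

theorem IOB_representation_general
    (V : Type*) [Fintype V] (K : Set V)
    (f : Set V → Set V) :
    (f Set.univ = K ∧
     (∀ A, f A ⊆ A) ∧
     (∀ A, K ∩ A ⊆ f A) ∧
     (∀ A, A ≠ ∅ → f A ≠ ∅) ∧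
     (∀ A B, f (A ∪ B) ⊆ f A ∪ f B) ∧
     (∀ A B, f A ⊆ f (A ∪ B) ∨ f B ⊆ f (A ∪ B))) ↔
    (∃ r : V → V → Prop, (∀ v, r v v) ∧ Ferrers r ∧ opt Set.univ r = K ∧
      ∀ A, f A = opt A r) := by
  constructor
  · rintro ⟨hT, hS, -, hC, hO, hR⟩
    have hf : ∀ A, f A = opt A (revealedPref f) := fun A =>
      (subset_opt_revealedPref hS hO).antisymm (opt_revealedPref_subset hS hC hR A.toFinite)
    exact ⟨revealedPref f, revealedPref_refl hS hC, ferrers_revealedPref hS hO hR,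
      by rw [← hf, hT], hf⟩
  · rintro ⟨r, hrefl, hF, rfl, hf⟩
    obtain rfl : f = (opt · r) := funext hf
    exact ⟨rfl, fun _ _ hv => hv.1, fun A => opt_inter_subset_opt A.subset_univ,
      fun A hA => (hF.opt_nonempty hrefl A.toFinite (Set.nonempty_iff_ne_empty.mpr hA)).ne_empty,
      fun _ _ => opt_union_subset, fun _ _ => hF.opt_subset_opt_union_or⟩

theorem IOB_representation
    (V : Type*) [Fintype V] [Nonempty V] (K : Set V) (hK : K.Nonempty)
    (f : Set V → Set V) :
    (f Set.univ = K ∧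
     (∀ A, f A ⊆ A) ∧
     (∀ A, K ∩ A ⊆ f A) ∧
     (∀ A, A ≠ ∅ → f A ≠ ∅) ∧
     (∀ A B, f (A ∪ B) ⊆ f A ∪ f B) ∧
     (∀ A B, f A ⊆ f (A ∪ B) ∨ f B ⊆ f (A ∪ B))) ↔
    (∃ r : V → V → Prop, (∀ v, r v v) ∧ Ferrers r ∧ opt Set.univ r = K ∧
      ∀ A, f A = opt A r) :=
  IOB_representation_general V K f
end

section
/- Let V be a nonempty finite type and K ⊆ V nonempty. A function f : Set V → Set V satisfies Tautology, Success, Inclusion, Disjunctive Overlap and Disjunctive Rationality if and only if there exists a biorder r on V anchored on K such that f A = opt(A, r) for every A ⊆ V. (This is the representation theorem for biorder-based (BOB) revision operators: the same postulates as for interval-order-based revision but without Consistency.) -/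
theorem BOB_representation
    (V : Type*) [Fintype V] [Nonempty V] (K : Set V) (hK : K.Nonempty)
    (f : Set V → Set V) :
    (f Set.univ = K ∧
     (∀ A, f A ⊆ A) ∧
     (∀ A, K ∩ A ⊆ f A) ∧
     (∀ A B, f (A ∪ B) ⊆ f A ∪ f B) ∧
     (∀ A B, f A ⊆ f (A ∪ B) ∨ f B ⊆ f (A ∪ B))) ↔
    (∃ r : V → V → Prop, Ferrers r ∧ opt Set.univ r = K ∧
      ∀ A, f A = opt A r) := by
  classical
  constructor
  · rintro ⟨hT, hS, hI, hO, hR⟩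
    set r : V → V → Prop := fun v u => v ∈ f {v, u} with hrdef
    -- Chernoff property
    have alpha : ∀ {A B : Set V} {v : V}, v ∈ f A → B ⊆ A → v ∈ B → v ∈ f B := by
      intro A B v hv hBA hvB
      have h1 : B ∪ (A \ B) = A := Set.union_diff_cancel hBA
      have h2 : v ∈ f B ∪ f (A \ B) := hO B (A \ B) (by rw [h1]; exact hv)
      rcases h2 with h | h
      · exact h
      · exact absurd hvB (hS _ h).2
    -- expansion via Disjunctive Rationality
    have expand : ∀ (s : Finset V) (v : V), v ∈ f {v} →
        (∀ u ∈ s, v ∈ f {v, u}) → v ∈ f ({v} ∪ ↑s) := by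
      intro s
      induction s using Finset.induction_on with
      | empty => intro v h _; simpa using h
      | insert _ _ ha ih =>
        rename_i a s
        intro v hv hall
        have h1 : v ∈ f ({v} ∪ ↑s) :=
          ih v hv (fun u hu => hall u (Finset.mem_insert_of_mem hu))
        have h2 : v ∈ f {v, a} := hall a (Finset.mem_insert_self a s)
        have heq : ({v} ∪ ↑s) ∪ ({v, a} : Set V) = {v} ∪ ↑(insert a s) := by
          ext x
          simp only [Set.mem_union, Set.mem_singleton_iff, Set.mem_insert_iff,
            Finset.coe_insert, Finset.mem_coe]
          tauto
        rcases hR ({v} ∪ ↑s) {v, a} with hc | hc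
        · rw [← heq]; exact hc h1
        · rw [← heq]; exact hc h2
    have hmain : ∀ A, f A = opt A r := by
      intro A
      ext v
      constructor
      · intro hv
        have hvA : v ∈ A := hS A hv
        refine ⟨hvA, fun u hu => ?_⟩
        have hsub : ({v, u} : Set V) ⊆ A := by
          intro x hx
          rcases hx with h | h
          · subst h; exact hvA
          · subst h; exact hu
        exact alpha hv hsub (Or.inl rfl)
      · rintro ⟨hvA, hall⟩
        have hv1 : v ∈ f {v} := by
          have := hall v hvA
          simpa [hrdef] using this
        have hA : A.Finite := Set.toFinite A
        have h2 : ∀ u ∈ hA.toFinset, v ∈ f {v, u} := by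
          intro u hu
          exact hall u (by simpa using hu)
        have h3 := expand hA.toFinset v hv1 h2
        have heq : ({v} : Set V) ∪ ↑hA.toFinset = A := by
          rw [Set.Finite.coe_toFinset]
          exact Set.union_eq_self_of_subset_left (Set.singleton_subset_iff.mpr hvA)
        rwa [heq] at h3
    refine ⟨r, ?_, ?_, hmain⟩
    · intro v u v' u' h1 h2
      have heq : ({v, u} : Set V) ∪ {v', u'} = {v, u, v', u'} := by ext x; simp; tauto
      have hsub1 : ({v, u'} : Set V) ⊆ {v, u, v', u'} := by
        intro x hx; simp at hx ⊢; tauto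
      have hsub2 : ({v', u} : Set V) ⊆ {v, u, v', u'} := by
        intro x hx; simp at hx ⊢; tauto
      rcases hR ({v, u} : Set V) {v', u'} with hc | hc
      · left
        have hv : v ∈ f ({v, u, v', u'} : Set V) := by rw [← heq]; exact hc h1
        exact alpha hv hsub1 (Or.inl rfl)
      · right
        have hv : v' ∈ f ({v, u, v', u'} : Set V) := by rw [← heq]; exact hc h2
        exact alpha hv hsub2 (Or.inl rfl)
    · rw [← hmain]; exact hT
  · rintro ⟨r, hF, hanch, hopt⟩
    refine ⟨?_, ?_, ?_, ?_, ?_⟩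
    · rw [hopt]; exact hanch
    · intro A v hv; rw [hopt] at hv; exact hv.1
    · rintro A v ⟨hvK, hvA⟩
      rw [hopt]
      rw [← hanch] at hvK
      exact ⟨hvA, fun u _ => hvK.2 u trivial⟩
    · intro A B v hv
      rw [hopt] at hv
      rw [hopt A, hopt B]
      rcases hv.1 with h | h
      · exact Or.inl ⟨h, fun u hu => hv.2 u (Or.inl hu)⟩
      · exact Or.inr ⟨h, fun u hu => hv.2 u (Or.inr hu)⟩
    · intro A B
      by_contra h
      push_neg at h
      obtain ⟨hA, hB⟩ := h
      obtain ⟨v, hvA, hvn⟩ := Set.not_subset.mp hA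
      obtain ⟨w, hwB, hwn⟩ := Set.not_subset.mp hB
      rw [hopt] at hvA hwB hvn hwn
      have hvU : v ∈ A ∪ B := Or.inl hvA.1
      have hwU : w ∈ A ∪ B := Or.inr hwB.1
      have hv' : ∃ u ∈ A ∪ B, ¬ r v u := by
        by_contra h'; push_neg at h'; exact hvn ⟨hvU, h'⟩
      have hw' : ∃ u ∈ A ∪ B, ¬ r w u := by
        by_contra h'; push_neg at h'; exact hwn ⟨hwU, h'⟩
      obtain ⟨u, huU, hru⟩ := hv'
      obtain ⟨u', hu'U, hru'⟩ := hw'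
      have huB : u ∈ B := by
        rcases huU with h | h
        · exact absurd (hvA.2 u h) hru
        · exact h
      have hu'A : u' ∈ A := by
        rcases hu'U with h | h
        · exact h
        · exact absurd (hwB.2 u' h) hru'
      rcases hF v u' w u (hvA.2 u' hu'A) (hwB.2 u huB) with h | h
      · exact hru h
      · exact hru' h
end

section
/- Let V be a nonempty finite type and K ⊆ V nonempty. A function f : Set V → Set V satisfies Tautology, Success, Inclusion, Disjunctive Overlap, Disjunctive Rationality and Consistent Cautious Monotony if and only if there exists a z-transitive biorder r on V anchored on K such that f A = opt(A, r) for every A ⊆ V. (This is the representation theorem for z-transitive biorder-based (ZTBOB) revision operators.) -/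
theorem ZTBOB_representation
    (V : Type*) [Fintype V] [Nonempty V] (K : Set V) (hK : K.Nonempty)
    (f : Set V → Set V) :
    (f Set.univ = K ∧
     (∀ A, f A ⊆ A) ∧
     (∀ A, K ∩ A ⊆ f A) ∧
     (∀ A B, f (A ∪ B) ⊆ f A ∪ f B) ∧
     (∀ A B, f A ⊆ f (A ∪ B) ∨ f B ⊆ f (A ∪ B)) ∧
     (∀ A B, f A ≠ ∅ → f A ⊆ B → f (A ∩ B) ⊆ f A)) ↔
    (∃ r : V → V → Prop, Ferrers r ∧ ZTrans r ∧ opt Set.univ r = K ∧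
      ∀ A, f A = opt A r) := by
  classical
  constructor
  · rintro ⟨h1, h2, h3, h4, h5, h6⟩
    set r : V → V → Prop := fun v u => v ∈ f {v, u} with hrdef
    -- If C ⊆ A then f A ∩ C ⊆ f C (from Overlap + Success)
    have lemA : ∀ A C : Set V, C ⊆ A → ∀ v, v ∈ f A → v ∈ C → v ∈ f C := by
      intro A C hCA v hv hvC
      have hA : C ∪ (A \ C) = A := Set.union_diff_cancel hCA
      have h := h4 C (A \ C)
      rw [hA] at h
      rcases h hv with h' | h'
      · exact h'
      · exact absurd hvC (h2 _ h').2
    -- generalized disjunctive rationality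
    have DRU : ∀ s : Finset V, ∀ g : V → Set V, s.Nonempty →
        ∃ a ∈ s, f (g a) ⊆ f (⋃ i ∈ s, g i) := by
      intro s g
      induction s using Finset.induction_on with
      | empty => intro hs; exact absurd hs (by simp)
      | insert _ _ ha ih =>
        rename_i a t
        intro _
        rcases t.eq_empty_or_nonempty with rfl | htne
        · refine ⟨a, Finset.mem_insert_self a _, ?_⟩
          simp
        · obtain ⟨b, hb, hsub⟩ := ih htne
          have hun : (⋃ i ∈ insert a t, g i) = g a ∪ ⋃ i ∈ t, g i := by
            simp [Finset.set_biUnion_insert]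
          rcases h5 (g a) (⋃ i ∈ t, g i) with h | h
          · exact ⟨a, Finset.mem_insert_self a _, by rw [hun]; exact h⟩
          · exact ⟨b, Finset.mem_insert_of_mem hb, by rw [hun]; exact hsub.trans h⟩
    -- f A = opt A r
    have key : ∀ A, f A = opt A r := by
      intro A
      apply Set.Subset.antisymm
      · intro v hv
        refine ⟨h2 A hv, fun u hu => ?_⟩
        exact lemA A {v, u} (by
          intro x hx
          rcases hx with rfl | rfl
          · exact h2 A hv
          · exact hu) v hv (by left; rfl)
      · rintro v ⟨hvA, hdom⟩
        have hfin : A.Finite := Set.toFinite A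
        have hsv : v ∈ hfin.toFinset := hfin.mem_toFinset.2 hvA
        obtain ⟨u, hu, hsub⟩ := DRU hfin.toFinset (fun u => ({v, u} : Set V)) ⟨v, hsv⟩
        have hU : (⋃ i ∈ hfin.toFinset, ({v, i} : Set V)) = A := by
          ext x
          simp only [Set.mem_iUnion, Set.Finite.mem_toFinset, Set.mem_insert_iff,
            Set.mem_singleton_iff]
          constructor
          · rintro ⟨i, hi, rfl | rfl⟩
            · exact hvA
            · exact hi
          · intro hx; exact ⟨x, hx, Or.inr rfl⟩
        rw [hU] at hsub
        exact hsub (hdom u (hfin.mem_toFinset.1 hu))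
    have ropt : ∀ v u, r v u ↔ v ∈ opt ({v, u} : Set V) r := by
      intro v u; show v ∈ f {v, u} ↔ _; rw [key]
    -- Ferrers
    have hFer : Ferrers r := by
      intro v u v' u' hvu hvu'
      have hTun : ({v, u} : Set V) ∪ {v', u'} = {v, u, v', u'} := by
        ext x; simp; tauto
      rcases h5 ({v, u} : Set V) ({v', u'} : Set V) with h | h <;> rw [hTun] at h
      · left
        have : v ∈ opt ({v, u, v', u'} : Set V) r := by rw [← key]; exact h hvu
        exact this.2 u' (by simp)
      · right
        have : v' ∈ opt ({v, u, v', u'} : Set V) r := by rw [← key]; exact h hvu'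
        exact this.2 u (by simp)
    -- ZTrans
    have hZ : ZTrans r := by
      intro u v z huv hvz hzz
      have hSun : ({u, v} : Set V) ∪ {v, z} = {u, v, z} := by
        ext x; simp; tauto
      have huS : u ∈ f ({u, v, z} : Set V) := by
        rcases h5 ({u, v} : Set V) ({v, z} : Set V) with h | h <;> rw [hSun] at h
        · exact h huv
        · -- v ∈ f {u,v,z}; use CCM with B = {u,v}
          have hvS : v ∈ f ({u, v, z} : Set V) := h hvz
          have hne : f ({u, v, z} : Set V) ≠ ∅ := by
            intro h0; rw [h0] at hvS; exact hvS
          have hsub : f ({u, v, z} : Set V) ⊆ ({u, v} : Set V) := by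
            intro x hx
            rw [key] at hx
            rcases hx.1 with rfl | rfl | rfl
            · left; rfl
            · right; rfl
            · exact absurd (hx.2 x (by simp)) hzz
          have hCCM := h6 ({u, v, z} : Set V) ({u, v} : Set V) hne hsub
          have hIB : ({u, v, z} : Set V) ∩ {u, v} = ({u, v} : Set V) := by
            ext x; simp; tauto
          rw [hIB] at hCCM
          exact hCCM huv
      have : u ∈ opt ({u, v, z} : Set V) r := by rw [← key]; exact huS
      exact this.2 z (by simp)
    exact ⟨r, hFer, hZ, by rw [← key, h1], key⟩
  · rintro ⟨r, hF, hZ, hanch, hfr⟩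
    refine ⟨?_, ?_, ?_, ?_, ?_, ?_⟩
    · rw [hfr, hanch]
    · intro A v hv; rw [hfr] at hv; exact hv.1
    · rintro A v ⟨hvK, hvA⟩
      rw [hfr]
      rw [← hanch] at hvK
      exact ⟨hvA, fun u _ => hvK.2 u (Set.mem_univ u)⟩
    · intro A B v hv
      rw [hfr] at hv
      rcases hv.1 with h | h
      · left; rw [hfr]; exact ⟨h, fun u hu => hv.2 u (Or.inl hu)⟩
      · right; rw [hfr]; exact ⟨h, fun u hu => hv.2 u (Or.inr hu)⟩
    · intro A B
      by_contra hcon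
      push_neg at hcon
      obtain ⟨x, hx, hxU⟩ := Set.not_subset.1 hcon.1
      obtain ⟨y, hy, hyU⟩ := Set.not_subset.1 hcon.2
      rw [hfr] at hx hy hxU hyU
      -- x fails on some b ∈ B, y fails on some a ∈ A
      have hxb : ∃ b ∈ B, ¬ r x b := by
        by_contra hc; push_neg at hc
        refine hxU ⟨Or.inl hx.1, fun u hu => ?_⟩
        rcases hu with hu | hu
        · exact hx.2 u hu
        · exact hc u hu
      have hya : ∃ a ∈ A, ¬ r y a := by
        by_contra hc; push_neg at hc
        refine hyU ⟨Or.inr hy.1, fun u hu => ?_⟩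
        rcases hu with hu | hu
        · exact hc u hu
        · exact hy.2 u hu
      obtain ⟨b, hbB, hxb⟩ := hxb
      obtain ⟨a, haA, hya⟩ := hya
      rcases hF x a y b (hx.2 a haA) (hy.2 b hbB) with h | h
      · exact hxb h
      · exact hya h
    · -- Consistent Cautious Monotony, semantically
      intro A B hne hsub
      rw [hfr] at hne hsub ⊢
      rw [hfr]
      obtain ⟨v0, hv0⟩ := Set.nonempty_iff_ne_empty.2 hne
      intro w hw
      obtain ⟨⟨hwA, hwB⟩, hwdom⟩ := hw
      refine ⟨hwA, fun u huA => ?_⟩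
      by_contra hwu
      -- the trace is total
      have trace : ∀ p q : V, (∀ y, r p y → r q y) ∨ (∀ y, r q y → r p y) := by
        intro p q
        by_contra hc
        push_neg at hc
        obtain ⟨⟨y1, hpy1, hqy1⟩, ⟨y2, hqy2, hpy2⟩⟩ := hc
        rcases hF p y1 q y2 hpy1 hqy2 with h | h
        · exact hpy2 h
        · exact hqy1 h
      have hv0AB : v0 ∈ A ∩ B := ⟨hv0.1, hsub hv0⟩
      have hrwv0 : r w v0 := hwdom v0 hv0AB
      -- the set of bad elements
      set T : Finset V := Finset.univ.filter
        (fun x => x ∈ A ∧ ¬ r w x ∧ ∀ y, r w y → r x y) with hTdef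
      have hTmem : ∀ x, x ∈ T ↔ x ∈ A ∧ ¬ r w x ∧ ∀ y, r w y → r x y := by
        intro x; simp [hTdef]
      have hTne : T.Nonempty := by
        refine ⟨u, (hTmem u).2 ⟨huA, hwu, ?_⟩⟩
        have huu : r u u := by
          by_contra huu
          exact hwu (hZ w v0 u hrwv0 (hv0.2 u huA) huu)
        rcases trace u w with h | h
        · exact absurd (h u huu) hwu
        · exact fun y hy => h y hy
      obtain ⟨m, hmT, hmax⟩ := T.exists_max_image
        (fun x => (Finset.univ.filter (fun y => r x y)).card) hTne
      obtain ⟨hmA, hwm, hmdom⟩ := (hTmem m).1 hmT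
      -- m ∉ B, hence m ∉ opt A, hence m fails on some a ∈ A
      have hmB : m ∉ B := fun hmB => hwm (hwdom m ⟨hmA, hmB⟩)
      have hma : ∃ a ∈ A, ¬ r m a := by
        by_contra hc; push_neg at hc
        exact hmB (hsub ⟨hmA, hc⟩)
      obtain ⟨a, haA, hma⟩ := hma
      have hrmv0 : r m v0 := hmdom v0 hrwv0
      have haa : r a a := by
        by_contra haa
        exact hma (hZ m v0 a hrmv0 (hv0.2 a haA) haa)
      -- everything m dominates, a dominates
      have hDma : ∀ y, r m y → r a y := by
        intro y hy
        rcases hF m y a a hy haa with h | h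
        · exact absurd h hma
        · exact h
      have hwa : ¬ r w a := fun h => hma (hmdom a h)
      have haT : a ∈ T := (hTmem a).2 ⟨haA, hwa, fun y hy => hDma y (hmdom y hy)⟩
      have hlt : (Finset.univ.filter (fun y => r m y)).card <
          (Finset.univ.filter (fun y => r a y)).card := by
        apply Finset.card_lt_card
        constructor
        · intro y hy
          simp only [Finset.mem_filter, Finset.mem_univ, true_and] at hy ⊢
          exact hDma y hy
        · intro hcon
          have := hcon (by simp [haa] : a ∈ Finset.univ.filter (fun y => r a y))
          simp only [Finset.mem_filter, Finset.mem_univ, true_and] at this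
          exact hma this
      exact absurd (hmax a haT) (not_le.2 hlt)
end

section
/- Let V be a nonempty finite type and K ⊆ V nonempty. A function f : Set V → Set V satisfies Tautology, Success, Inclusion, Disjunctive Overlap, Disjunctive Rationality and Subexpansion if and only if there exists a transitive biorder r on V anchored on K such that f A = opt(A, r) for every A ⊆ V. (This is the representation theorem for transitive biorder-based (TBOB) revision operators.) -/
theorem TBOB_representation
    (V : Type*) [Fintype V] [Nonempty V] (K : Set V) (hK : K.Nonempty)
    (f : Set V → Set V) :
    (f Set.univ = K ∧
     (∀ A, f A ⊆ A) ∧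
     (∀ A, K ∩ A ⊆ f A) ∧
     (∀ A B, f (A ∪ B) ⊆ f A ∪ f B) ∧
     (∀ A B, f A ⊆ f (A ∪ B) ∨ f B ⊆ f (A ∪ B)) ∧
     (∀ A B, f B ∩ A ≠ ∅ → f (A ∩ B) ⊆ f B ∩ A)) ↔
    (∃ r : V → V → Prop, Ferrers r ∧ Transitive r ∧ opt Set.univ r = K ∧
      ∀ A, f A = opt A r) := by
  constructor
  · rintro ⟨htaut, hsucc, hincl, hover, hdr, hsub⟩
    -- key lemma A: if v ∈ f A then v ∈ f {v, u} for every u ∈ A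
    have lemA : ∀ (A : Set V) (v : V), v ∈ f A → ∀ u ∈ A, v ∈ f {v, u} := by
      intro A v hv u hu
      have hvA : v ∈ A := hsucc A hv
      have hsplit : A = {v, u} ∪ (A \ {v}) := by
        ext x
        simp only [Set.mem_union, Set.mem_insert_iff, Set.mem_singleton_iff, Set.mem_diff]
        constructor
        · intro hx
          by_cases hxv : x = v
          · exact Or.inl (Or.inl hxv)
          · exact Or.inr ⟨hx, hxv⟩
        · rintro ((h | h) | h)
          · exact h ▸ hvA
          · exact h ▸ hu
          · exact h.1
      rcases hover {v, u} (A \ {v}) (hsplit ▸ hv) with h | h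
      · exact h
      · exact absurd (hsucc _ h).2 (by simp)
    -- key lemma B: converse
    have lemB : ∀ (A : Set V) (v : V), v ∈ A → (∀ u ∈ A, v ∈ f {v, u}) → v ∈ f A := by
      have key : ∀ (s : Set V), s.Finite → ∀ v : V, v ∉ s →
          (∀ u ∈ insert v s, v ∈ f {v, u}) → v ∈ f (insert v s) := by
        intro s hs
        refine Set.Finite.induction_on (motive := fun s _ => ∀ v : V, v ∉ s →
            (∀ u ∈ insert v s, v ∈ f {v, u}) → v ∈ f (insert v s)) s hs ?_ @fun a t ha ht ih => ?_
        · intro v _ h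
          have := h v (by simp)
          simpa using this
        · intro v hvnotin hall
          have hvt : v ∉ t := fun h => hvnotin (Set.mem_insert_of_mem a h)
          have hsplit : insert v (insert a t) = ({v, a} : Set V) ∪ insert v t := by
            ext x
            simp only [Set.mem_insert_iff, Set.mem_union, Set.mem_singleton_iff]
            tauto
          rw [hsplit]
          rcases hdr {v, a} (insert v t) with h | h
          · exact h (hall a (by simp))
          · refine h (ih v hvt (fun u hu => hall u ?_))
            rcases hu with hu | hu
            · exact Or.inl hu
            · exact Or.inr (Or.inr hu)
      intro A v hvA hall
      have hA : insert v (A \ {v}) = A := by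
        rw [Set.insert_diff_singleton, Set.insert_eq_self.mpr hvA]
      rw [← hA]
      exact key (A \ {v}) (Set.toFinite _) v (fun h => h.2 rfl)
        (fun u hu => hall u (hA ▸ hu))
    -- the representation
    have hrep : ∀ A, f A = opt A (fun v u => v ∈ f {v, u}) := by
      intro A
      ext v
      simp only [opt, Set.mem_setOf_eq]
      constructor
      · intro hv
        exact ⟨hsucc A hv, fun u hu => lemA A v hv u hu⟩
      · rintro ⟨hvA, hall⟩
        exact lemB A v hvA hall
    refine ⟨fun v u => v ∈ f {v, u}, ?_, ?_, ?_, hrep⟩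
    · -- Ferrers
      intro v u v' u' hvu hv'u'
      have hsplit : ({v, u} : Set V) ∪ {v', u'} = {v, u, v', u'} := by
        ext x
        simp only [Set.mem_union, Set.mem_insert_iff, Set.mem_singleton_iff]
        tauto
      rcases hdr {v, u} {v', u'} with h | h
      · rw [hsplit] at h
        exact Or.inl (lemA _ v (h hvu) u' (by simp))
      · rw [hsplit] at h
        exact Or.inr (lemA _ v' (h hv'u') u (by simp))
    · -- Transitive
      intro v u w hvu huw
      have hsplit : ({v, u} : Set V) ∪ {u, w} = {v, u, w} := by
        ext x
        simp only [Set.mem_union, Set.mem_insert_iff, Set.mem_singleton_iff]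
        tauto
      rcases hdr {v, u} {u, w} with h | h
      · rw [hsplit] at h
        exact lemA _ v (h hvu) w (by simp)
      · rw [hsplit] at h
        have hu : u ∈ f {v, u, w} := h huw
        have hne : f {v, u, w} ∩ {v, u} ≠ ∅ :=
          Set.Nonempty.ne_empty ⟨u, hu, by simp⟩
        have hsub' := hsub {v, u} {v, u, w} hne
        have hint : ({v, u} : Set V) ∩ {v, u, w} = {v, u} := by
          ext x
          simp only [Set.mem_inter_iff, Set.mem_insert_iff, Set.mem_singleton_iff]
          tauto
        rw [hint] at hsub'
        exact lemA _ v (hsub' hvu).1 w (by simp)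
    · rw [← hrep]
      exact htaut
  · rintro ⟨r, hF, hT, hanch, hrep⟩
    refine ⟨?_, ?_, ?_, ?_, ?_, ?_⟩
    · rw [hrep]; exact hanch
    · intro A v hv
      rw [hrep] at hv
      exact hv.1
    · rintro A v ⟨hvK, hvA⟩
      rw [← hanch] at hvK
      rw [hrep]
      exact ⟨hvA, fun u hu => hvK.2 u (Set.mem_univ u)⟩
    · intro A B v hv
      rw [hrep] at hv
      obtain ⟨hvAB, hall⟩ := hv
      rcases hvAB with h | h
      · exact Or.inl ((hrep A).symm ▸ ⟨h, fun u hu => hall u (Or.inl hu)⟩)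
      · exact Or.inr ((hrep B).symm ▸ ⟨h, fun u hu => hall u (Or.inr hu)⟩)
    · intro A B
      by_cases h : f A ⊆ f (A ∪ B)
      · exact Or.inl h
      · right
        obtain ⟨x, hxA, hxnot⟩ := Set.not_subset.mp h
        rw [hrep] at hxA
        rw [hrep] at hxnot
        obtain ⟨b, hbAB, hbnot⟩ : ∃ b ∈ A ∪ B, ¬ r x b := by
          by_contra hc
          push_neg at hc
          exact hxnot ⟨Or.inl hxA.1, hc⟩
        have hbB : b ∈ B := by
          rcases hbAB with hb | hb
          · exact absurd (hxA.2 b hb) hbnot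
          · exact hb
        intro w hw
        rw [hrep] at hw ⊢
        refine ⟨Or.inr hw.1, fun u hu => ?_⟩
        rcases hu with hu | hu
        · exact (hF w b x u (hw.2 b hbB) (hxA.2 u hu)).resolve_right hbnot
        · exact hw.2 u hu
    · intro A B hne v hv
      obtain ⟨w, hwB, hwA⟩ := Set.nonempty_iff_ne_empty.mpr hne
      rw [hrep] at hwB hv
      have hwAB : w ∈ A ∩ B := ⟨hwA, hwB.1⟩
      have hrvw : r v w := hv.2 w hwAB
      refine ⟨?_, hv.1.1⟩
      rw [hrep]
      exact ⟨hv.1.2, fun u hu => hT hrvw (hwB.2 u hu)⟩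
end

section
/- Let V be a nonempty finite type, let r be a z-transitive biorder on V, let Diss(r) := {z ∈ V | ¬ r z z}, and let r' be the relation defined by: r' u v iff (u ∉ Diss(r) and v ∉ Diss(r) and r u v) or v ∈ Diss(r). Then for every S ⊆ V with opt(S, r) ≠ ∅, one has opt(S, r') = opt(S, r). -/
theorem derived_relation_preserves_nonempty_opt
    (V : Type*) [Fintype V] [Nonempty V] (r : V → V → Prop)
    (hFerrers : Ferrers r) (hZT : ZTrans r)
    (Diss : Set V) (hDiss : Diss = {z : V | ¬ r z z})
    (r' : V → V → Prop)
    (hr' : ∀ u v, r' u v ↔ ((u ∉ Diss ∧ v ∉ Diss ∧ r u v) ∨ v ∈ Diss)) :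
    ∀ S : Set V, opt S r ≠ ∅ → opt S r' = opt S r := by
  intro S hS
  obtain ⟨v, hvS, hvr⟩ : ∃ v, v ∈ opt S r := by
    rcases Set.nonempty_iff_ne_empty.2 hS with ⟨v, hv⟩; exact ⟨v, hv⟩
  have hvD : v ∉ Diss := by simp [hDiss]; exact hvr v hvS
  ext w
  constructor
  · rintro ⟨hwS, hwr'⟩
    have hwv := (hr' w v).1 (hwr' v hvS)
    rcases hwv with ⟨hwD, _, hwv⟩ | h
    · refine ⟨hwS, fun u huS => ?_⟩
      by_cases huD : u ∈ Diss
      · have : ¬ r u u := by rw [hDiss] at huD; exact huD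
        exact hZT w v u hwv (hvr u huS) this
      · rcases (hr' w u).1 (hwr' u huS) with ⟨_, _, h⟩ | h
        · exact h
        · exact absurd h huD
    · exact absurd h hvD
  · rintro ⟨hwS, hwr⟩
    have hwD : w ∉ Diss := by simp [hDiss]; exact hwr w hwS
    refine ⟨hwS, fun u huS => ?_⟩
    rw [hr']
    by_cases huD : u ∈ Diss
    · exact Or.inr huD
    · exact Or.inl ⟨hwD, huD, hwr u huS⟩
end

section
/- Let V be a nonempty finite type, K ⊆ V nonempty, ρ an interval order on V anchored on K, and set g A := opt(A, ρ). Let C be a collection of subsets of V such that (g, C) is a CL structure over K. Then for all A, B ⊆ V: if A ∪ B ∈ C and B ∉ C, then g(A ∪ B) = g A. -/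
/-- A CL structure over `K`: `g` satisfies Success and Consistency, `C` satisfies
C1, C3 and C4', and `g` and `C` jointly satisfy the coherence condition. -/
def CLStructure {V : Type*} (K : Set V) (g : Set V → Set V) (C : Set (Set V)) : Prop :=
  (∀ A, g A ⊆ A) ∧
  (∀ A, A ≠ ∅ → g A ≠ ∅) ∧
  (∀ A, K ⊆ A → A ∈ C) ∧
  (∀ A B, A ∪ B ∈ C → A ∈ C ∨ B ∈ C) ∧
  (∀ A B, A ∈ C → B ∈ C → A ∪ B ∈ C) ∧
  (∀ A B, A ∈ C → A ∩ B ∉ C → g A ∩ B = ∅)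

theorem IOB_CL_union_incredible_disjunct
    (V : Type*) [Fintype V] [Nonempty V] (K : Set V) (hK : K.Nonempty)
    (ρ : V → V → Prop) (hrefl : ∀ v, ρ v v) (hFerrers : Ferrers ρ)
    (hanch : opt Set.univ ρ = K)
    (g : Set V → Set V) (hg : ∀ A, g A = opt A ρ)
    (C : Set (Set V)) (hCL : CLStructure K g C) :
    ∀ A B : Set V, A ∪ B ∈ C → B ∉ C → g (A ∪ B) = g A := by
  obtain ⟨hsucc, hcons, hC1, hC3, hC4, hjoint⟩ := hCL
  intro A B hAB hB
  -- g (A ∪ B) ∩ B = ∅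
  have hABB : (A ∪ B) ∩ B = B := by
    ext x; simp only [Set.mem_inter_iff, Set.mem_union]; tauto
  have hdisj : g (A ∪ B) ∩ B = ∅ := by
    apply hjoint _ B hAB
    rw [hABB]; exact hB
  have hnotB : ∀ x ∈ g (A ∪ B), x ∉ B := by
    intro x hx hxB
    have : x ∈ g (A ∪ B) ∩ B := ⟨hx, hxB⟩
    rw [hdisj] at this; exact this
  ext v
  constructor
  · -- g (A ∪ B) ⊆ g A
    intro hv
    have hvA : v ∈ A := by
      have := hsucc (A ∪ B) hv
      rcases this with h | h
      · exact h
      · exact absurd h (hnotB v hv)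
    rw [hg] at hv ⊢
    exact ⟨hvA, fun u hu => hv.2 u (Or.inl hu)⟩
  · -- g A ⊆ g (A ∪ B)
    intro hv
    rw [hg] at hv
    obtain ⟨hvA, hvopt⟩ := hv
    -- suppose some u ∈ B is not beaten by v
    by_cases hU : ∀ u ∈ B, ρ v u
    · rw [hg]
      exact ⟨Or.inl hvA, fun u hu => hu.elim (hvopt u) (hU u)⟩
    · exfalso
      push_neg at hU
      set U : Set V := {u ∈ B | ¬ ρ v u} with hUdef
      have hUne : U ≠ ∅ := by
        obtain ⟨u, huB, hu⟩ := hU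
        intro h
        have : u ∈ U := ⟨huB, hu⟩
        rw [h] at this; exact this
      have hgU : g U ≠ ∅ := hcons U hUne
      obtain ⟨w, hw⟩ := Set.nonempty_iff_ne_empty.mpr hgU
      rw [hg] at hw
      obtain ⟨⟨hwB, hwv⟩, hwopt⟩ := hw
      -- w beats everything in A ∪ B
      have hwAB : w ∈ g (A ∪ B) := by
        rw [hg]
        refine ⟨Or.inr hwB, ?_⟩
        rintro u (huA | huB)
        · -- Ferrers (v, u) (w, w)
          rcases hFerrers v u w w (hvopt u huA) (hrefl w) with h | h
          · exact absurd h hwv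
          · exact h
        · by_cases huU : ρ v u
          · -- Ferrers (w, w) (v, u)
            rcases hFerrers w w v u (hrefl w) huU with h | h
            · exact h
            · exact absurd h hwv
          · exact hwopt u ⟨huB, huU⟩
      exact hnotB w hwAB hwB
end

section
/- Let V be a nonempty finite type, let r be a biorder on V, let Diss(r) := {z ∈ V | ¬ r z z}, and let r' be the relation defined by: r' u v iff (u ∉ Diss(r) and v ∉ Diss(r) and r u v) or v ∈ Diss(r). Then r' is an interval order on V (i.e., r' is reflexive and satisfies the Ferrers condition). If, in addition, r is transitive, then r' is a total preorder on V (i.e., r' is total and transitive). -/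
theorem derived_relation_interval_order_and_total_preorder
    (V : Type*) [Fintype V] [Nonempty V] (r : V → V → Prop)
    (hFerrers : Ferrers r)
    (Diss : Set V) (hDiss : Diss = {z : V | ¬ r z z})
    (r' : V → V → Prop)
    (hr' : ∀ u v, r' u v ↔ ((u ∉ Diss ∧ v ∉ Diss ∧ r u v) ∨ v ∈ Diss)) :
    ((∀ v, r' v v) ∧ Ferrers r') ∧
    (Transitive r → (∀ u v, r' u v ∨ r' v u) ∧ Transitive r') := by
  have hmem : ∀ z : V, z ∈ Diss ↔ ¬ r z z := by
    intro z; rw [hDiss]; rfl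
  constructor
  · constructor
    · intro v
      rw [hr']
      by_cases h : v ∈ Diss
      · exact Or.inr h
      · refine Or.inl ⟨h, h, ?_⟩; by_contra hn; exact h ((hmem v).mpr hn)
    · intro v u v' u' h1 h2
      rw [hr'] at h1 h2 ⊢
      rw [hr' v' u]
      by_cases hu' : u' ∈ Diss
      · exact Or.inl (Or.inr hu')
      · by_cases hu : u ∈ Diss
        · exact Or.inr (Or.inr hu)
        · rcases h1 with ⟨hv, _, hvu⟩ | h; swap; · exact absurd h hu
          rcases h2 with ⟨hv', _, hv'u'⟩ | h; swap; · exact absurd h hu'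
          rcases hFerrers v u v' u' hvu hv'u' with h | h
          · exact Or.inl (Or.inl ⟨hv, hu', h⟩)
          · exact Or.inr (Or.inl ⟨hv', hu, h⟩)
  · intro htr
    constructor
    · intro u v
      rw [hr', hr']
      by_cases hv : v ∈ Diss
      · exact Or.inl (Or.inr hv)
      · by_cases hu : u ∈ Diss
        · exact Or.inr (Or.inr hu)
        · have huu : r u u := by by_contra hn; exact hu ((hmem u).mpr hn)
          have hvv : r v v := by by_contra hn; exact hv ((hmem v).mpr hn)
          rcases hFerrers u u v v huu hvv with h | h
          · exact Or.inl (Or.inl ⟨hu, hv, h⟩)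
          · exact Or.inr (Or.inl ⟨hv, hu, h⟩)
    · intro a b c h1 h2
      rw [hr'] at h1 h2 ⊢
      by_cases hc : c ∈ Diss
      · exact Or.inr hc
      · rcases h2 with ⟨hb, _, hbc⟩ | h; swap; · exact absurd h hc
        rcases h1 with ⟨ha, _, hab⟩ | h; swap; · exact absurd h hb
        exact Or.inl ⟨ha, hc, htr hab hbc⟩
end
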